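/- arXiv:1309.1961 — 3 statements merged into one kernel-verified Lean document; each statement's English description precedes it below -/
import Mathlib

section
/- Every balanceable bipartite graph contains no odd wheel and no odd 3-path configuration. -/
open SimpleGraph

universe u

variable {V : Type u}

/-- Removing the vertex set `S` from `G` leaves a disconnected (or empty) graph. -/
def RemoveDisconnects (G : SimpleGraph V) (S : Set V) : Prop :=
  ¬ (G.induce (Sᶜ)).Connected

/-- `S` is a star cutset of `G`: `S = {x} ∪ R` with `R ⊆ N(x)`, and removing `S`
disconnects `G`. -/
def IsStarCutset (G : SimpleGraph V) (S : Set V) : Prop :=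
  (∃ x ∈ S, ∀ y ∈ S, y = x ∨ G.Adj x y) ∧ RemoveDisconnects G S

def NoStarCutset (G : SimpleGraph V) : Prop :=
  ∀ S : Set V, ¬ IsStarCutset G S

/-- `G` is bipartite. -/
def Bipartite (G : SimpleGraph V) : Prop := G.Colorable 2

/-- Degree of a vertex, as the cardinality of its neighbor set. -/
noncomputable def deg (G : SimpleGraph V) (v : V) : ℕ := (G.neighborSet v).ncard

/-- A hole: an induced (chordless) cycle of length at least 4. -/
def IsHole (G : SimpleGraph V) {v : V} (c : G.Walk v v) : Prop :=
  c.IsCycle ∧ 4 ≤ c.length ∧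
    ∀ a b : V, a ∈ c.support → b ∈ c.support → G.Adj a b → s(a, b) ∈ c.edges

/-- `G` is balanceable: there is a signing of the edges with `+1, -1` such that
every hole has weight `≡ 0 (mod 4)`. -/
def Balanceable (G : SimpleGraph V) : Prop :=
  ∃ w : Sym2 V → ℤ, (∀ e ∈ G.edgeSet, w e = 1 ∨ w e = -1) ∧
    ∀ (v : V) (c : G.Walk v v), IsHole G c → ((c.edges.map w).sum) % 4 = 0

/-- `G` is balanced: every hole has length `≡ 0 (mod 4)`. -/
def BalancedGraph (G : SimpleGraph V) : Prop :=
  ∀ (v : V) (c : G.Walk v v), IsHole G c → c.length % 4 = 0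

/-- `G` has no hole of length 4. -/
def FourHoleFree (G : SimpleGraph V) : Prop :=
  ∀ (v : V) (c : G.Walk v v), IsHole G c → c.length ≠ 4

def LinearBalanceable (G : SimpleGraph V) : Prop :=
  Balanceable G ∧ FourHoleFree G

/-- `G` is 2-connected: at least 3 vertices and deleting any vertex leaves it connected. -/
def TwoConnected (G : SimpleGraph V) : Prop :=
  3 ≤ Nat.card V ∧ ∀ v : V, (G.induce ({v}ᶜ : Set V)).Connected

/-- `e` is a chord of the cycle `c`. -/
def IsChord (G : SimpleGraph V) {x : V} (c : G.Walk x x) (e : Sym2 V) : Prop :=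
  e ∈ G.edgeSet ∧ e ∉ c.edges ∧ ∀ v ∈ e, v ∈ c.support

/-- `e` is the unique chord of the cycle `c`. -/
def IsUniqueChord (G : SimpleGraph V) {x : V} (c : G.Walk x x) (e : Sym2 V) : Prop :=
  c.IsCycle ∧ IsChord G c e ∧ ∀ f, IsChord G c f → f = e

/-- A pair of twins: distinct vertices with the same neighborhood, of size at least 3. -/
def IsTwinPair (G : SimpleGraph V) (u v : V) : Prop :=
  u ≠ v ∧ G.neighborSet u = G.neighborSet v ∧ 3 ≤ (G.neighborSet u).ncard

/-- `v` is a cut vertex: two vertices distinct from `v` are connected in `G` but not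
in `G - v`. -/
def IsCutVertex (G : SimpleGraph V) (v : V) : Prop :=
  ∃ (x y : V) (hx : x ∈ ({v}ᶜ : Set V)) (hy : y ∈ ({v}ᶜ : Set V)),
    G.Reachable x y ∧ ¬ (G.induce ({v}ᶜ : Set V)).Reachable ⟨x, hx⟩ ⟨y, hy⟩

/-- The graph `R₁₀`: the 10-cycle `x₁x₂…x₁₀x₁` together with the chords `xᵢx_{i+5}`. -/
def R10 : SimpleGraph (ZMod 10) :=
  SimpleGraph.fromRel (fun i j => j = i + 1 ∨ j = i + 5)

/-- `H` is a chordless path (as a graph): some chordless Hamiltonian path carries all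
of its edges. -/
def IsChordlessPathGraph {W : Type*} (H : SimpleGraph W) : Prop :=
  ∃ (u v : W) (p : H.Walk u v), p.IsPath ∧ (∀ w, w ∈ p.support) ∧
    ∀ e ∈ H.edgeSet, e ∈ p.edges

/-- `(X₁, X₂, A₁, A₂, B₁, B₂)` is a split of a 2-join of `G`. -/
structure TwoJoinSplit (G : SimpleGraph V) (X1 X2 A1 A2 B1 B2 : Set V) : Prop where
  cover : ∀ v, v ∈ X1 ∨ v ∈ X2
  disj : Disjoint X1 X2
  A1sub : A1 ⊆ X1
  B1sub : B1 ⊆ X1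
  A2sub : A2 ⊆ X2
  B2sub : B2 ⊆ X2
  A1B1disj : Disjoint A1 B1
  A2B2disj : Disjoint A2 B2
  A1ne : A1.Nonempty
  B1ne : B1.Nonempty
  A2ne : A2.Nonempty
  B2ne : B2.Nonempty
  adjA : ∀ a1 ∈ A1, ∀ a2 ∈ A2, G.Adj a1 a2
  adjB : ∀ b1 ∈ B1, ∀ b2 ∈ B2, G.Adj b1 b2
  noOther : ∀ x1 ∈ X1, ∀ x2 ∈ X2, G.Adj x1 x2 →
    (x1 ∈ A1 ∧ x2 ∈ A2) ∨ (x1 ∈ B1 ∧ x2 ∈ B2)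
  path1 : ∃ a b : X1, (a : V) ∈ A1 ∧ (b : V) ∈ B1 ∧ (G.induce X1).Reachable a b
  path2 : ∃ a b : X2, (a : V) ∈ A2 ∧ (b : V) ∈ B2 ∧ (G.induce X2).Reachable a b
  notPath1 : A1.ncard = 1 → B1.ncard = 1 → ¬ IsChordlessPathGraph (G.induce X1)
  notPath2 : A2.ncard = 1 → B2.ncard = 1 → ¬ IsChordlessPathGraph (G.induce X2)

/-- `(X₁, X₂, A₁, …, A₆)` is a split of a 6-join of `G`. -/
structure SixJoinSplit (G : SimpleGraph V) (X1 X2 A1 A2 A3 A4 A5 A6 : Set V) : Prop where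
  cover : ∀ v, v ∈ X1 ∨ v ∈ X2
  disj : Disjoint X1 X2
  sub1 : A1 ⊆ X1
  sub3 : A3 ⊆ X1
  sub5 : A5 ⊆ X1
  sub2 : A2 ⊆ X2
  sub4 : A4 ⊆ X2
  sub6 : A6 ⊆ X2
  disj13 : Disjoint A1 A3
  disj15 : Disjoint A1 A5
  disj35 : Disjoint A3 A5
  disj24 : Disjoint A2 A4
  disj26 : Disjoint A2 A6
  disj46 : Disjoint A4 A6
  ne1 : A1.Nonempty
  ne2 : A2.Nonempty
  ne3 : A3.Nonempty
  ne4 : A4.Nonempty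
  ne5 : A5.Nonempty
  ne6 : A6.Nonempty
  adj12 : ∀ a ∈ A1, ∀ b ∈ A2, G.Adj a b
  adj23 : ∀ a ∈ A2, ∀ b ∈ A3, G.Adj a b
  adj34 : ∀ a ∈ A3, ∀ b ∈ A4, G.Adj a b
  adj45 : ∀ a ∈ A4, ∀ b ∈ A5, G.Adj a b
  adj56 : ∀ a ∈ A5, ∀ b ∈ A6, G.Adj a b
  adj61 : ∀ a ∈ A6, ∀ b ∈ A1, G.Adj a b
  noOther : ∀ x ∈ X1, ∀ y ∈ X2, G.Adj x y →
    (x ∈ A1 ∧ y ∈ A2) ∨ (x ∈ A1 ∧ y ∈ A6) ∨ (x ∈ A3 ∧ y ∈ A2) ∨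
    (x ∈ A3 ∧ y ∈ A4) ∨ (x ∈ A5 ∧ y ∈ A4) ∨ (x ∈ A5 ∧ y ∈ A6)
  card1 : 4 ≤ X1.ncard
  card2 : 4 ≤ X2.ncard

/-- `p` is a chordless path of `G`. -/
def IsChordlessPath (G : SimpleGraph V) {u v : V} (p : G.Walk u v) : Prop :=
  p.IsPath ∧ ∀ a b : V, a ∈ p.support → b ∈ p.support → G.Adj a b → s(a, b) ∈ p.edges

/-- The union of the vertex sets of `p` and `q` is the vertex set of a hole of `G`. -/
def PairHole (G : SimpleGraph V) {u v : V} (p q : G.Walk u v) : Prop :=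
  ∃ (x : V) (c : G.Walk x x), IsHole G c ∧
    ∀ w : V, w ∈ c.support ↔ (w ∈ p.support ∨ w ∈ q.support)

/-- `p₁, p₂, p₃` form a 3-path configuration connecting `u` and `v`. -/
def IsThreePathConfig (G : SimpleGraph V) {u v : V}
    (p1 p2 p3 : G.Walk u v) : Prop :=
  u ≠ v ∧ ¬ G.Adj u v ∧
  IsChordlessPath G p1 ∧ IsChordlessPath G p2 ∧ IsChordlessPath G p3 ∧
  PairHole G p1 p2 ∧ PairHole G p1 p3 ∧ PairHole G p2 p3

/-- `G` contains an odd wheel. -/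
def HasOddWheel (G : SimpleGraph V) : Prop :=
  ∃ (x v : V) (c : G.Walk v v), IsHole G c ∧ x ∉ c.support ∧
    3 ≤ {w : V | w ∈ c.support ∧ G.Adj x w}.ncard ∧
    Odd {w : V | w ∈ c.support ∧ G.Adj x w}.ncard

/-!
Fix a signing `w` witnessing balanceability.

Odd wheels: the spokes at the hub `x` cut the rim `H` into sectors, and since `G` has no
triangles each sector closes up with its two spokes to a hole. Adding the weights of these
holes, `w(H) + 2 ∑ w(spokes) ≡ 0 (mod 4)`; as `w(H) ≡ 0` and every spoke has odd weight, the
number of spokes is even.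

Odd 3-path configurations: any two of the paths are internally disjoint and together make up
the edges of a hole, so `w(Pᵢ) + w(Pⱼ) ≡ 0 (mod 4)` for `i ≠ j`, whence
`2 w(P₁) ≡ 0 (mod 4)`. But `P₁` joins the two colour classes, so it has odd length and hence
odd weight.
-/

open SimpleGraph Walk

variable {G : SimpleGraph V}

namespace SimpleGraph.Walk

lemma mem_support_of_toSubgraph_le {u v u' v' y : V} {p : G.Walk u v} {c : G.Walk u' v'}
    (hpc : p.toSubgraph ≤ c.toSubgraph) (hy : y ∈ p.support) : y ∈ c.support := by
  simpa using hpc.1 (p.mem_verts_toSubgraph.mpr hy)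

lemma IsPath.ncard_neighborSet_toSubgraph_eq_two {u v y : V} {p : G.Walk u v} (hp : p.IsPath)
    (hy : y ∈ p.support) (hyu : y ≠ u) (hyv : y ≠ v) :
    (p.toSubgraph.neighborSet y).ncard = 2 := by
  obtain ⟨i, rfl, hi⟩ := mem_support_iff_exists_getVert.mp hy
  refine hp.ncard_neighborSet_toSubgraph_internal_eq_two (fun h => hyu ?_) ?_
  · simp [h]
  · exact lt_of_le_of_ne hi (by rintro rfl; simp at hyv)

lemma IsPath.neighborSet_toSubgraph_eq_of_le {u v w y : V} {p : G.Walk u v} {c : G.Walk w w}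
    (hp : p.IsPath) (hc : c.IsCycle) (hpc : p.toSubgraph ≤ c.toSubgraph) (hy : y ∈ p.support)
    (hyu : y ≠ u) (hyv : y ≠ v) :
    p.toSubgraph.neighborSet y = c.toSubgraph.neighborSet y := by
  refine Set.eq_of_subset_of_ncard_le (Subgraph.neighborSet_subset_of_subgraph hpc y) ?_
    c.finite_neighborSet_toSubgraph
  rw [hc.ncard_neighborSet_toSubgraph_eq_two (mem_support_of_toSubgraph_le hpc hy),
    hp.ncard_neighborSet_toSubgraph_eq_two hy hyu hyv]

lemma IsPath.toSubgraph_adj_of_le {u v w y z : V} {p : G.Walk u v} {c : G.Walk w w}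
    (hp : p.IsPath) (hc : c.IsCycle) (hpc : p.toSubgraph ≤ c.toSubgraph) (hy : y ∈ p.support)
    (hyu : y ≠ u) (hyv : y ≠ v) (h : c.toSubgraph.Adj y z) : p.toSubgraph.Adj y z := by
  change z ∈ p.toSubgraph.neighborSet y
  rwa [hp.neighborSet_toSubgraph_eq_of_le hc hpc hy hyu hyv]

end SimpleGraph.Walk

lemma List.ncard_setOf_mem_and_eq_countP {α : Type*} {l : List α} (hl : l.Nodup) (p : α → Prop)
    [DecidablePred p] : {y | y ∈ l ∧ p y}.ncard = l.countP (p ·) := by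
  classical
  rw [show {y | y ∈ l ∧ p y} = ↑(l.filter (p ·)).toFinset by ext; simp, Set.ncard_coe_finset,
    List.toFinset_card_of_nodup (hl.filter _), List.countP_eq_length_filter]

section IsHole

variable {o : V} {c : G.Walk o o}

lemma IsHole.toSubgraph_adj {y z : V} (hc : IsHole G c) (hy : y ∈ c.support)
    (hz : z ∈ c.support) (h : G.Adj y z) : c.toSubgraph.Adj y z :=
  adj_toSubgraph_iff_mem_edges.mpr (hc.2.2 y z hy hz h)

lemma IsHole.toSubgraph_le {u v : V} (hc : IsHole G c) {p : G.Walk u v}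
    (hp : ∀ y ∈ p.support, y ∈ c.support) : p.toSubgraph ≤ c.toSubgraph :=
  ⟨fun y hy => by simpa using hp y (by simpa using hy), fun y z h =>
    hc.toSubgraph_adj (hp y (mem_support_of_adj_toSubgraph h))
      (hp z (mem_support_of_adj_toSubgraph h.symm)) h.adj_sub⟩

lemma IsHole.rotate [DecidableEq V] {u : V} (hc : IsHole G c) (hu : u ∈ c.support) :
    IsHole G (c.rotate u hu) := by
  refine ⟨hc.1.rotate hu, by simpa using hc.2.1, fun y z hy hz h => ?_⟩
  rw [← adj_toSubgraph_iff_mem_edges, toSubgraph_rotate]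
  rw [mem_support_rotate_iff] at hy hz
  exact hc.toSubgraph_adj hy hz h

lemma IsHole.isHole_sector (hG : G.CliqueFree 3) {x a b : V} (hc : IsHole G c)
    (hx : x ∉ c.support) {A : G.Walk a b} (hA : A.IsPath) (hab : a ≠ b)
    (hAc : A.toSubgraph ≤ c.toSubgraph) (hxa : G.Adj x a) (hxb : G.Adj x b)
    (hspokes : ∀ y ∈ A.support, G.Adj x y → y = a ∨ y = b) :
    IsHole G (cons hxa.symm (cons hxb A.reverse)) := by
  have hAsupp : ∀ y ∈ A.support, y ∈ c.support := fun y => mem_support_of_toSubgraph_le hAc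
  have hxA : x ∉ A.support := fun h => hx (hAsupp x h)
  have hnab : ¬ G.Adj a b := by
    classical
    exact fun h => hG {x, a, b} (is3Clique_triple_iff.mpr ⟨hxa, hxb, h⟩)
  have hlen : 2 ≤ A.length := by
    by_contra! hlt
    interval_cases h : A.length
    · exact hab (eq_of_length_eq_zero h)
    · exact hnab (adj_of_length_eq_one h)
  have hchord : ∀ y ∈ A.support, ∀ z ∈ A.support, G.Adj y z → A.toSubgraph.Adj y z := by
    intro y hy z hz h
    have hcyz := hc.toSubgraph_adj (hAsupp y hy) (hAsupp z hz) h
    by_cases hyab : y ≠ a ∧ y ≠ b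
    · exact hA.toSubgraph_adj_of_le hc.1 hAc hy hyab.1 hyab.2 hcyz
    by_cases hzab : z ≠ a ∧ z ≠ b
    · exact (hA.toSubgraph_adj_of_le hc.1 hAc hz hzab.1 hzab.2 hcyz.symm).symm
    have := h.ne
    grind [G.adj_symm]
  refine ⟨?_, by simp; omega, fun y z hy hz h => ?_⟩
  · rw [cons_isCycle_iff, cons_isPath_iff]
    refine ⟨⟨hA.reverse, by simpa using hxA⟩, ?_⟩
    simp only [edges_cons, edges_reverse, List.mem_cons, List.mem_reverse, not_or]
    exact ⟨by simp [hab, hxa.ne'], fun h => hxA (A.snd_mem_support_of_mem_edges h)⟩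
  · have hsupp : ∀ y ∈ (cons hxa.symm (cons hxb A.reverse)).support,
        y = x ∨ y ∈ A.support := by
      simp only [support_cons, support_reverse, List.mem_cons, List.mem_reverse]
      rintro y (rfl | rfl | hy) <;> simp_all
    simp only [edges_cons, edges_reverse, List.mem_cons, List.mem_reverse]
    rcases hsupp y hy with rfl | hy' <;> rcases hsupp z hz with rfl | hz'
    · exact absurd h (G.loopless.irrefl _)
    · rcases hspokes z hz' h with rfl | rfl <;> simp
    · rcases hspokes y hy' h.symm with rfl | rfl <;> simp
    · exact Or.inr (Or.inr (adj_toSubgraph_iff_mem_edges.mp (hchord y hy' z hz' h)))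

end IsHole

section PairHole

variable {o u v : V} {c : G.Walk o o} {p q : G.Walk u v}

lemma IsHole.toSubgraph_adj_or (hc : IsHole G c) (hp : IsChordlessPath G p)
    (hq : IsChordlessPath G q)
    (hsupp : ∀ y, y ∈ c.support ↔ y ∈ p.support ∨ y ∈ q.support)
    {y z : V} (h : c.toSubgraph.Adj y z) : p.toSubgraph.Adj y z ∨ q.toSubgraph.Adj y z := by
  have hzc := mem_support_of_adj_toSubgraph h.symm
  have hinner : ∀ (r r' : G.Walk u v), IsChordlessPath G r →
      (∀ y, y ∈ r.support → y ∈ c.support) → y ∈ r.support → y ∉ r'.support →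
      r.toSubgraph.Adj y z := fun r r' hr hrc hy hy' =>
    hr.1.toSubgraph_adj_of_le hc.1 (hc.toSubgraph_le hrc) hy
      (by rintro rfl; exact hy' r'.start_mem_support)
      (by rintro rfl; exact hy' r'.end_mem_support) h
  have hpc : ∀ y, y ∈ p.support → y ∈ c.support := fun y hy => (hsupp y).mpr (Or.inl hy)
  have hqc : ∀ y, y ∈ q.support → y ∈ c.support := fun y hy => (hsupp y).mpr (Or.inr hy)
  by_cases hyp : y ∈ p.support <;> by_cases hyq : y ∈ q.support
  · rcases (hsupp z).mp hzc with hzp | hzq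
    · exact Or.inl (adj_toSubgraph_iff_mem_edges.mpr (hp.2 y z hyp hzp h.adj_sub))
    · exact Or.inr (adj_toSubgraph_iff_mem_edges.mpr (hq.2 y z hyq hzq h.adj_sub))
  · exact Or.inl (hinner p q hp hpc hyp hyq)
  · exact Or.inr (hinner q p hq hqc hyq hyp)
  · exact absurd ((hsupp y).mp (mem_support_of_adj_toSubgraph h)) (by tauto)

/-- The hole has two edges at `u`, and each of them is the first edge of `p` or of `q`. -/
lemma IsHole.snd_ne_snd (hc : IsHole G c) (hp : IsChordlessPath G p) (hq : IsChordlessPath G q)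
    (hsupp : ∀ y, y ∈ c.support ↔ y ∈ p.support ∨ y ∈ q.support) : p.snd ≠ q.snd := by
  intro heq
  have hsub : c.toSubgraph.neighborSet u ⊆ {p.snd} := fun z hz => by
    rcases hc.toSubgraph_adj_or hp hq hsupp hz with h | h
    · exact (hp.1.snd_of_toSubgraph_adj h).symm
    · exact heq ▸ (hq.1.snd_of_toSubgraph_adj h).symm
  have := Set.ncard_le_ncard hsub
  rw [Set.ncard_singleton,
    hc.1.ncard_neighborSet_toSubgraph_eq_two ((hsupp u).mpr (Or.inl p.start_mem_support))] at this
  omega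

/-- Walking along `p` from `u`, a first inner vertex shared with `q` would force the edge
of `p` before it into `q` as well (both are paths inside the hole), back to `p.snd = q.snd`. -/
lemma IsHole.notMem_support_of_ne (hc : IsHole G c) (hp : IsChordlessPath G p)
    (hq : IsChordlessPath G q)
    (hsupp : ∀ y, y ∈ c.support ↔ y ∈ p.support ∨ y ∈ q.support)
    {y : V} (hy : y ∈ p.support) (hyu : y ≠ u) (hyv : y ≠ v) : y ∉ q.support := by
  have hqc : q.toSubgraph ≤ c.toSubgraph := hc.toSubgraph_le fun y hy => (hsupp y).mpr (Or.inr hy)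
  have hpc : p.toSubgraph ≤ c.toSubgraph := hc.toSubgraph_le fun y hy => (hsupp y).mpr (Or.inl hy)
  suffices ∀ i, 0 < i → i < p.length → p.getVert i ∉ q.support by
    obtain ⟨i, rfl, hi⟩ := mem_support_iff_exists_getVert.mp hy
    exact this i (Nat.pos_of_ne_zero fun h => hyu (by simp [h]))
      (lt_of_le_of_ne hi fun h => hyv (by simp [h]))
  intro i
  induction i with
  | zero => intro h; omega
  | succ i ih =>
    intro _ hi hzq
    have hzu : p.getVert (i + 1) ≠ u := fun h => by
      have := (hp.1.getVert_eq_start_iff hi.le).mp h; omega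
    have hzv : p.getVert (i + 1) ≠ v := fun h => by
      have := (hp.1.getVert_eq_end_iff hi.le).mp h; omega
    have hqz := hq.1.toSubgraph_adj_of_le hc.1 hqc hzq hzu hzv
      (hpc.2 (p.toSubgraph_adj_getVert (by omega : i < p.length)).symm)
    rcases i with _ | i
    · rw [getVert_zero] at hqz
      exact hc.snd_ne_snd hp hq hsupp (hq.1.snd_of_toSubgraph_adj hqz.symm).symm
    · exact ih (by omega) (by omega) (mem_support_of_adj_toSubgraph hqz.symm)

lemma IsHole.edges_perm_append (hc : IsHole G c) (hp : IsChordlessPath G p)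
    (hq : IsChordlessPath G q)
    (hsupp : ∀ y, y ∈ c.support ↔ y ∈ p.support ∨ y ∈ q.support) :
    c.edges.Perm (p.edges ++ q.edges) := by
  have hdisj : ∀ e ∈ p.edges, ∀ e' ∈ q.edges, e ≠ e' := by
    rintro e he _ he' rfl
    induction e using Sym2.ind with | h y z => ?_
    have hend : ∀ t ∈ s(y, z), t = u ∨ t = v := fun t ht => by
      by_contra! hne
      exact hc.notMem_support_of_ne hp hq hsupp (p.mem_support_of_mem_edges he ht) hne.1 hne.2
        (q.mem_support_of_mem_edges he' ht)
    have hsnd : ∀ (r : G.Walk u v), r.IsPath → s(y, z) ∈ r.edges → r.snd = v :=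
      fun r hr hr' => by
        rcases hend y (by simp) with rfl | rfl <;> rcases hend z (by simp) with rfl | rfl
        · exact absurd (r.adj_of_mem_edges hr') (G.loopless.irrefl _)
        · exact hr.snd_of_toSubgraph_adj (adj_toSubgraph_iff_mem_edges.mpr hr')
        · exact hr.snd_of_toSubgraph_adj (adj_toSubgraph_iff_mem_edges.mpr (Sym2.eq_swap ▸ hr'))
        · exact absurd (r.adj_of_mem_edges hr') (G.loopless.irrefl _)
    exact hc.snd_ne_snd hp hq hsupp ((hsnd p hp.1 he).trans (hsnd q hq.1 he').symm)
  refine (List.perm_ext_iff_of_nodup hc.1.isTrail.edges_nodup (List.nodup_append.mpr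
    ⟨hp.1.isTrail.edges_nodup, hq.1.isTrail.edges_nodup, hdisj⟩)).mpr fun e => ?_
  induction e using Sym2.ind with | h y z => ?_
  simp only [List.mem_append, ← adj_toSubgraph_iff_mem_edges]
  refine ⟨hc.toSubgraph_adj_or hp hq hsupp, fun h => h.elim (fun h => ?_) (fun h => ?_)⟩
  · exact (hc.toSubgraph_le fun y hy => (hsupp y).mpr (Or.inl hy)).2 h
  · exact (hc.toSubgraph_le fun y hy => (hsupp y).mpr (Or.inr hy)).2 h

end PairHole

def IsBalancedSigning (G : SimpleGraph V) (w : Sym2 V → ℤ) : Prop :=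
  (∀ e ∈ G.edgeSet, w e = 1 ∨ w e = -1) ∧
    ∀ (v : V) (c : G.Walk v v), IsHole G c → (c.edges.map w).sum % 4 = 0

namespace IsBalancedSigning

variable {w : Sym2 V → ℤ}

lemma sum_edges_emod_two (hw : IsBalancedSigning G w) {u v : V} (p : G.Walk u v) :
    (p.edges.map w).sum % 2 = p.length % 2 := by
  induction p with
  | nil => simp
  | cons h p ih =>
    simp only [edges_cons, List.map_cons, List.sum_cons, length_cons, Nat.cast_add, Nat.cast_one]
    rcases hw.1 s(_, _) h with h | h <;> omega

lemma sum_edges_sector_emod_four (hw : IsBalancedSigning G w) (hG : G.CliqueFree 3)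
    {o x a b : V} {c : G.Walk o o} (hc : IsHole G c) (hx : x ∉ c.support) {A : G.Walk a b}
    (hA : A.IsPath) (hab : a ≠ b) (hAc : A.toSubgraph ≤ c.toSubgraph) (hxa : G.Adj x a)
    (hxb : G.Adj x b) (hspokes : ∀ y ∈ A.support, G.Adj x y → y = a ∨ y = b) :
    ((A.edges.map w).sum + w s(x, a) + w s(x, b)) % 4 = 0 := by
  have := hw.2 _ _ (hc.isHole_sector hG hx hA hab hAc hxa hxb hspokes)
  simp only [edges_cons, edges_reverse, List.map_cons, List.map_reverse, List.sum_cons,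
    List.sum_reverse, Sym2.eq_swap (a := a)] at this
  omega

/-- `Q` is the part of the current sector already walked. Summing the holes bounded by
consecutive spokes at the hub `x`, every inner spoke is counted twice, and
`2 * w e ≡ 2 (mod 4)` for every edge `e`. -/
lemma sum_edges_add_spokes_emod_four [DecidableRel G.Adj] (hw : IsBalancedSigning G w)
    (hG : G.CliqueFree 3) {o x : V} {c : G.Walk o o} (hc : IsHole G c) (hx : x ∉ c.support)
    {s t : V} (P : G.Walk s t) {a : V} (Q : G.Walk a s) (hQP : (Q.append P).IsPath)
    (hQPc : (Q.append P).toSubgraph ≤ c.toSubgraph) (hxa : G.Adj x a) (hxt : G.Adj x t)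
    (hQ : ∀ y ∈ Q.support.tail, ¬ G.Adj x y) :
    ((Q.edges.map w).sum + (P.edges.map w).sum + w s(x, a) + w s(x, t) +
      2 * P.support.tail.countP (G.Adj x ·)) % 4 = 2 := by
  induction P generalizing a with
  | nil =>
    cases Q with
    | nil => rcases hw.1 s(x, _) hxt with h | h <;> simp [h]
    | cons h Q => exact absurd hxt (hQ _ (by simp))
  | @cons s m t h P ih =>
    rw [← concat_append] at hQP hQPc
    rw [toSubgraph_append] at hQPc
    have hwQ : ((Q.concat h).edges.map w).sum = (Q.edges.map w).sum + w s(s, m) := by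
      simp [edges_concat]
    have hcount : (cons h P).support.tail.countP (G.Adj x ·) =
        P.support.tail.countP (G.Adj x ·) + if G.Adj x m then 1 else 0 := by
      rw [support_cons, List.tail_cons, ← cons_tail_support, List.countP_cons]
      simp
    simp only [edges_cons, List.map_cons, List.sum_cons, hcount]
    by_cases hxm : G.Adj x m
    · have hA : (Q.concat h).IsPath := hQP.of_append_left
      have ham : a ≠ m := fun ham => by
        subst ham
        simpa [← length_eq_zero_iff] using isPath_iff_nil.mp hA
      have hsec := hw.sum_edges_sector_emod_four hG hc hx hA ham (le_sup_left.trans hQPc) hxa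
        hxm fun y hy hxy => by
          simp only [support_concat, List.mem_append, List.mem_singleton, mem_support_iff] at hy
          rcases hy with (hy | hy) | hy
          · exact Or.inl hy
          · exact absurd hxy (hQ y hy)
          · exact Or.inr hy
      have hrest := ih nil (by simpa using hQP.of_append_right)
        (by simpa using le_sup_right.trans hQPc) hxm hxt (by simp)
      simp only [edges_nil, List.map_nil, List.sum_nil, zero_add] at hrest
      simp only [hxm, if_true]
      rcases hw.1 s(x, m) hxm with hm | hm <;> omega
    · have := ih (Q.concat h) hQP (by simpa using hQPc) hxa hxt fun y hy hxy => by
        simp only [concat_eq_append, mem_tail_support_append_iff, support_cons, support_nil,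
          List.tail_cons, List.mem_singleton] at hy
        rcases hy with hy | rfl
        · exact hQ y hy hxy
        · exact hxm hxy
      simp only [hxm, if_false]
      omega

lemma even_ncard_spokes (hw : IsBalancedSigning G w) (hG : G.CliqueFree 3) {o x : V}
    {c : G.Walk o o} (hc : IsHole G c) (hx : x ∉ c.support)
    (h2 : 2 ≤ {y | y ∈ c.support ∧ G.Adj x y}.ncard) :
    Even {y | y ∈ c.support ∧ G.Adj x y}.ncard := by
  classical
  obtain ⟨n₀, ⟨hn₀, hxn₀⟩, n₁, ⟨hn₁, hxn₁⟩, hne⟩ :=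
    (Set.one_lt_ncard (c.support.finite_toSet.subset fun y hy => hy.1)).mp h2
  set d := c.rotate n₀ hn₀
  have hd : IsHole G d := hc.rotate hn₀
  have hxd : x ∉ d.support := by simpa [d] using hx
  have hn₁d : n₁ ∈ d.support := by simpa [d] using hn₁
  set A := d.takeUntil n₁ hn₁d
  set B := d.dropUntil n₁ hn₁d
  have hAB : A.append B = d := take_spec d hn₁d
  have hA : A.IsPath := hd.1.isPath_takeUntil hn₁d
  have hB : B.IsPath := (hAB ▸ hd.1).isPath_of_append_right (not_nil_of_ne hne)
  have hle : A.toSubgraph ⊔ B.toSubgraph ≤ d.toSubgraph := by rw [← toSubgraph_append, hAB]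
  have hsA := hw.sum_edges_add_spokes_emod_four hG hd hxd A nil (by simpa using hA)
    (by simpa using le_sup_left.trans hle) hxn₀ hxn₁ (by simp)
  have hsB := hw.sum_edges_add_spokes_emod_four hG hd hxd B nil (by simpa using hB)
    (by simpa using le_sup_right.trans hle) hxn₁ hxn₀ (by simp)
  have hsd := hw.2 _ _ hd
  rw [← hAB, edges_append, List.map_append, List.sum_append] at hsd
  have hcount : {y | y ∈ c.support ∧ G.Adj x y}.ncard =
      A.support.tail.countP (G.Adj x ·) + B.support.tail.countP (G.Adj x ·) := by
    have hmem : ∀ y, y ∈ c.support ↔ y ∈ d.support.tail := fun y => by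
      rw [← mem_support_rotate_iff c n₀ hn₀, mem_support_iff]
      exact or_iff_right_of_imp fun h => by rw [h]; exact end_mem_tail_support hd.1.not_nil
    simp_rw [hmem]
    rw [List.ncard_setOf_mem_and_eq_countP hd.1.support_nodup, ← hAB, tail_support_append,
      List.countP_append]
  rw [hcount, Nat.even_iff]
  simp only [edges_nil, List.map_nil, List.sum_nil, zero_add] at hsA hsB
  rcases hw.1 s(x, n₀) hxn₀ with h0 | h0 <;> rcases hw.1 s(x, n₁) hxn₁ with h1 | h1 <;>
    omega

lemma sum_edges_add_emod_four_of_pairHole (hw : IsBalancedSigning G w) {u v : V}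
    {p q : G.Walk u v} (hp : IsChordlessPath G p) (hq : IsChordlessPath G q)
    (hpq : PairHole G p q) : ((p.edges.map w).sum + (q.edges.map w).sum) % 4 = 0 := by
  obtain ⟨o, c, hc, hsupp⟩ := hpq
  rw [← List.sum_append, ← List.map_append,
    ← ((hc.edges_perm_append hp hq hsupp).map w).sum_eq]
  exact hw.2 _ c hc

end IsBalancedSigning

theorem stmt9_general {V : Type u} (G : SimpleGraph V)
    (col : V → Bool) (hcol : ∀ u v : V, G.Adj u v → col u ≠ col v)
    (hbal : Balanceable G) :
    ¬ HasOddWheel G ∧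
    ∀ (u v : V), col u ≠ col v →
      ∀ p1 p2 p3 : G.Walk u v, ¬ IsThreePathConfig G p1 p2 p3 := by
  obtain ⟨w, hw⟩ : ∃ w, IsBalancedSigning G w := hbal
  let C : G.Coloring Bool := Coloring.mk col fun h => hcol _ _ h
  refine ⟨?_, fun u v huv p1 p2 p3 ⟨_, _, hp1, hp2, hp3, h12, h13, h23⟩ => ?_⟩
  · rintro ⟨x, v, c, hc, hx, h3, hodd⟩
    exact Nat.not_even_iff_odd.mpr hodd
      (hw.even_ncard_spokes (C.colorable.cliqueFree (by simp)) hc hx (by omega))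
  · have hodd : ∀ p : G.Walk u v, (p.edges.map w).sum % 2 = 1 := fun p => by
      have := (C.odd_length_iff_not_congr p).mpr (by
        change ¬col u = true ↔ col v = true
        revert huv
        cases col u <;> cases col v <;> decide)
      rw [hw.sum_edges_emod_two p]
      exact_mod_cast Nat.odd_iff.mp this
    have := hw.sum_edges_add_emod_four_of_pairHole hp1 hp2 h12
    have := hw.sum_edges_add_emod_four_of_pairHole hp1 hp3 h13
    have := hw.sum_edges_add_emod_four_of_pairHole hp2 hp3 h23
    have := hodd p1
    omega

/-- a balanceable bipartite graph contains no odd wheel and no odd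
3-path configuration. -/
theorem stmt9 {V : Type u} [Fintype V] (G : SimpleGraph V)
    (col : V → Bool) (hcol : ∀ u v : V, G.Adj u v → col u ≠ col v)
    (hbal : Balanceable G) :
    ¬ HasOddWheel G ∧
    ∀ (u v : V), col u ≠ col v →
      ∀ p1 p2 p3 : G.Walk u v, ¬ IsThreePathConfig G p1 p2 p3 :=
  stmt9_general G col hcol hbal
end

section
/- The graph R₁₀, defined as the 10-cycle x₁x₂...x₁₀x₁ together with the five chords xᵢx_{i+5} for 1 ≤ i ≤ 5, is balanceable: assigning weight +1 to the edges of the 10-cycle and -1 to the five chords makes every hole have weight congruent to 0 mod 4. -/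
open SimpleGraph

universe u

variable {V : Type u}

open Classical in
/-- The signing of `R₁₀` that assigns `+1` to the edges of the 10-cycle and `-1` to the
five chords. -/
noncomputable def r10sign : Sym2 (ZMod 10) → ℤ :=
  fun e => if ∃ i : ZMod 10, e = s(i, i + 1) then 1 else -1

/-!
A hole is an induced cycle, so its edges are exactly the edges of `R₁₀` spanned by its vertex
set `S`, and every vertex of `S` has exactly two neighbours in `S`. The weight of the hole is
then the number of cycle edges `s(u, u + 1)` spanned by `S` minus the number of chords
`s(u, u + 5)` spanned by `S`, and a check over all `2¹⁰` subsets `S ⊆ ℤ/10` shows that this is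
`≡ 0 (mod 4)` whenever every vertex of `S` has two neighbours in `S`.
-/

open Finset

def InducesTwoRegular {V : Type*} (G : SimpleGraph V) [DecidableRel G.Adj] (S : Finset V) :
    Prop :=
  ∀ u ∈ S, #{z ∈ S | G.Adj u z} = 2

section Hole

variable {V : Type*} {G : SimpleGraph V} {v : V} {c : G.Walk v v}

theorem IsHole.mk_mem_edges_iff (hc : IsHole G c) {a b : V} :
    s(a, b) ∈ c.edges ↔ a ∈ c.support ∧ b ∈ c.support ∧ G.Adj a b :=
  ⟨fun h => ⟨c.fst_mem_support_of_mem_edges h, c.snd_mem_support_of_mem_edges h,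
    c.adj_of_mem_edges h⟩, fun ⟨ha, hb, hab⟩ => hc.2.2 a b ha hb hab⟩

theorem IsHole.inducesTwoRegular_support [DecidableEq V] [DecidableRel G.Adj]
    (hc : IsHole G c) : InducesTwoRegular G c.support.toFinset := by
  intro u hu
  rw [List.mem_toFinset] at hu
  rw [← hc.1.ncard_neighborSet_toSubgraph_eq_two hu, ← Set.ncard_coe_finset]
  congr 1
  ext z
  simp [Subgraph.mem_neighborSet, Walk.adj_toSubgraph_iff_mem_edges, hc.mk_mem_edges_iff, hu]

end Hole

theorem R10_adj_iff {a b : ZMod 10} : R10.Adj a b ↔ b = a + 1 ∨ a = b + 1 ∨ b = a + 5 := by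
  revert a b
  simp only [R10, fromRel_adj]
  decide

instance : DecidableRel R10.Adj := fun _ _ => decidable_of_iff _ R10_adj_iff.symm

theorem r10sign_eq_one_or_eq_neg_one (e : Sym2 (ZMod 10)) : r10sign e = 1 ∨ r10sign e = -1 := by
  unfold r10sign
  split_ifs <;> simp

theorem r10sign_mk_add_one (u : ZMod 10) : r10sign s(u, u + 1) = 1 :=
  if_pos ⟨u, rfl⟩

theorem r10sign_mk_add_five (u : ZMod 10) : r10sign s(u, u + 5) = -1 := by
  refine if_neg ?_
  revert u
  decide

/-- Each edge of `R₁₀` is `s(u, u + 1)` for exactly one `u`, or `s(u, u + 5)` for exactly one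
`u` with `u.val < 5`. -/
theorem sum_r10sign_eq_card_sub_card {E : Finset (Sym2 (ZMod 10))} {S : Finset (ZMod 10)}
    (hE : ∀ a b, s(a, b) ∈ E ↔ a ∈ S ∧ b ∈ S ∧ R10.Adj a b) :
    ∑ e ∈ E, r10sign e = #{u ∈ S | u + 1 ∈ S} - #{u ∈ S | u.val < 5 ∧ u + 5 ∈ S} := by
  have hE' : E = {u ∈ S | u + 1 ∈ S}.image (fun u => s(u, u + 1)) ∪
      {u ∈ S | u.val < 5 ∧ u + 5 ∈ S}.image (fun u => s(u, u + 5)) := by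
    ext e
    induction e using Sym2.ind with | h a b => ?_
    simp only [mem_union, mem_image, mem_filter]
    constructor
    · rw [hE, R10_adj_iff]
      rintro ⟨ha, hb, rfl | rfl | rfl⟩
      · exact .inl ⟨a, ⟨ha, hb⟩, rfl⟩
      · exact .inl ⟨b, ⟨hb, ha⟩, Sym2.eq_swap⟩
      · have h10 : ∀ u : ZMod 10, u.val < 5 ∨ (u + 5).val < 5 ∧ u + 5 + 5 = u := by decide
        rcases h10 a with h | ⟨h, h'⟩
        · exact .inr ⟨a, ⟨ha, h, hb⟩, rfl⟩
        · exact .inr ⟨a + 5, ⟨hb, h, by rwa [h']⟩, by rw [h', Sym2.eq_swap]⟩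
    · rintro (⟨u, ⟨hu, hu'⟩, he⟩ | ⟨u, ⟨hu, -, hu'⟩, he⟩) <;> rw [← he, hE, R10_adj_iff]
      · exact ⟨hu, hu', .inl rfl⟩
      · exact ⟨hu, hu', .inr (.inr rfl)⟩
  have hdisj : ∀ u u' : ZMod 10, s(u, u + 1) ≠ s(u', u' + 5) := by decide
  have hinj₁ : ∀ u u' : ZMod 10, s(u, u + 1) = s(u', u' + 1) → u = u' := by decide
  have hinj₂ : ∀ u u' : ZMod 10, u.val < 5 → u'.val < 5 →
      s(u, u + 5) = s(u', u' + 5) → u = u' := by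
    decide
  rw [hE', sum_union, sum_image, sum_image]
  · simp [r10sign_mk_add_one, r10sign_mk_add_five, sub_eq_add_neg]
  · exact fun u hu u' hu' => hinj₂ u u' (mem_filter.1 hu).2.1 (mem_filter.1 hu').2.1
  · exact fun u _ u' _ => hinj₁ u u'
  · simp only [Finset.disjoint_left, mem_image, not_exists, not_and]
    rintro _ ⟨u, -, rfl⟩ u' - h
    exact hdisj u u' h.symm

set_option maxRecDepth 10000 in
/-- Conceptually: a hole of the Möbius ladder `R₁₀` either is a square on two consecutive rungs
(weight `0`) or winds once around the ladder using exactly one rung (weight `4`). -/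
theorem R10_card_sub_card_mod_four_of_inducesTwoRegular :
    ∀ S : Finset (ZMod 10), InducesTwoRegular R10 S →
      ((#{u ∈ S | u + 1 ∈ S} : ℤ) - #{u ∈ S | u.val < 5 ∧ u + 5 ∈ S}) % 4 = 0 := by
  simp only [InducesTwoRegular]
  decide

theorem IsHole.sum_r10sign_mod_four {v : ZMod 10} {c : R10.Walk v v} (hc : IsHole R10 c) :
    (c.edges.map r10sign).sum % 4 = 0 := by
  rw [← List.sum_toFinset _ hc.1.edges_nodup,
    sum_r10sign_eq_card_sub_card (S := c.support.toFinset)]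
  · exact R10_card_sub_card_mod_four_of_inducesTwoRegular _ hc.inducesTwoRegular_support
  · simp [hc.mk_mem_edges_iff]

/-- `R₁₀` is balanceable; in fact the signing `r10sign` gives every hole
weight `≡ 0 (mod 4)`. -/
theorem stmt10 :
    ((∀ e ∈ R10.edgeSet, r10sign e = 1 ∨ r10sign e = -1) ∧
      ∀ (v : ZMod 10) (c : R10.Walk v v), IsHole R10 c →
        ((c.edges.map r10sign).sum) % 4 = 0) ∧
    Balanceable R10 := by
  have hsign : ∀ e ∈ R10.edgeSet, r10sign e = 1 ∨ r10sign e = -1 :=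
    fun e _ => r10sign_eq_one_or_eq_neg_one e
  have hholes : ∀ (v : ZMod 10) (c : R10.Walk v v), IsHole R10 c →
      (c.edges.map r10sign).sum % 4 = 0 := fun _ _ hc => hc.sum_r10sign_mod_four
  exact ⟨⟨hsign, hholes⟩, r10sign, hsign, hholes⟩
end

section
/- In R₁₀, every edge is the unique chord of some cycle. -/
/-!
Rotations `i ↦ i + a` are automorphisms of `R₁₀`, and every edge is the image of `s(0, 1)` or
`s(0, 5)` under one of them. Automorphisms carry a cycle with a unique chord to a cycle with a
unique chord, so it suffices to exhibit one such cycle for each of these two edges.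
-/

open SimpleGraph

universe u

variable {V : Type u}

section Chords

variable {W : Type*} {G : SimpleGraph V} {G' : SimpleGraph W} {x : V}

theorem isChord_mk_iff (c : G.Walk x x) (u v : V) :
    IsChord G c s(u, v) ↔ G.Adj u v ∧ s(u, v) ∉ c.edges ∧ u ∈ c.support ∧ v ∈ c.support := by
  simp [IsChord]

theorem isUniqueChord_mk_iff (c : G.Walk x x) (u v : V) :
    IsUniqueChord G c s(u, v) ↔ c.IsCycle ∧ IsChord G c s(u, v) ∧
      ∀ a b, G.Adj a b → s(a, b) ∉ c.edges → a ∈ c.support → b ∈ c.support →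
        s(a, b) = s(u, v) := by
  simp only [IsUniqueChord, Sym2.forall, isChord_mk_iff, and_imp]

theorem SimpleGraph.Iso.isChord_map_iff (φ : G ≃g G') (c : G.Walk x x) (e : Sym2 V) :
    IsChord G' (c.map φ.toHom) (e.map φ) ↔ IsChord G c e := by
  have hφ : Function.Injective (Sym2.map φ) := Sym2.map.injective φ.injective
  simp only [IsChord, φ.map_mem_edgeSet_iff, Walk.edges_map, Walk.support_map,
    List.mem_map_of_injective hφ, List.mem_map_of_injective φ.injective, Sym2.mem_map,
    forall_exists_index, and_imp, forall_apply_eq_imp_iff₂, RelHom.coeFn_mk, RelIso.coe_fn_toEquiv]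

theorem IsUniqueChord.map_iso {c : G.Walk x x} {e : Sym2 V} (h : IsUniqueChord G c e)
    (φ : G ≃g G') : IsUniqueChord G' (c.map φ.toHom) (e.map φ) := by
  obtain ⟨hcycle, hchord, hunique⟩ := h
  refine ⟨hcycle.map φ.injective, (φ.isChord_map_iff c e).2 hchord, fun f hf => ?_⟩
  have hf_eq : (f.map φ.symm).map φ = f := by simp [Sym2.map_map]
  rw [← hf_eq, φ.isChord_map_iff] at hf
  rw [← hf_eq, hunique _ hf]

end Chords

instance inst_s12 : DecidableRel R10.Adj := fun a b =>
  decidable_of_iff _ (SimpleGraph.fromRel_adj (fun i j => j = i + 1 ∨ j = i + 5) a b).symm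

def R10.rotate (a : ZMod 10) : R10 ≃g R10 where
  toEquiv := Equiv.addRight a
  map_rel_iff' {u v} := by
    simp only [R10, fromRel_adj, Equiv.coe_addRight, ne_eq, add_left_inj]
    constructor <;> rintro ⟨hne, h⟩ <;> refine ⟨hne, ?_⟩ <;> grind

theorem R10.rotate_apply (a x : ZMod 10) : R10.rotate a x = x + a := rfl

theorem R10.exists_rotate_of_mem_edgeSet {e : Sym2 (ZMod 10)} (he : e ∈ R10.edgeSet) :
    ∃ a, e = s(0, 1).map (R10.rotate a) ∨ e = s(0, 5).map (R10.rotate a) := by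
  induction e using Sym2.ind with
  | _ u v =>
    simp only [mem_edgeSet, R10, fromRel_adj] at he
    simp only [Sym2.map_mk, R10.rotate_apply, zero_add]
    obtain ⟨-, (rfl | rfl) | (rfl | rfl)⟩ := he
    · exact ⟨u, .inl (by rw [add_comm])⟩
    · exact ⟨u, .inr (by rw [add_comm])⟩
    · exact ⟨v, .inl (by rw [add_comm, Sym2.eq_swap])⟩
    · exact ⟨v, .inr (by rw [add_comm, Sym2.eq_swap])⟩

def R10.octagon : R10.Walk 1 1 :=
  .cons (show R10.Adj 1 6 by decide) <| .cons (show R10.Adj 6 5 by decide) <|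
  .cons (show R10.Adj 5 0 by decide) <| .cons (show R10.Adj 0 9 by decide) <|
  .cons (show R10.Adj 9 8 by decide) <| .cons (show R10.Adj 8 3 by decide) <|
  .cons (show R10.Adj 3 2 by decide) <| .cons (show R10.Adj 2 1 by decide) .nil

def R10.hexagon : R10.Walk 0 0 :=
  .cons (show R10.Adj 0 1 by decide) <| .cons (show R10.Adj 1 6 by decide) <|
  .cons (show R10.Adj 6 5 by decide) <| .cons (show R10.Adj 5 4 by decide) <|
  .cons (show R10.Adj 4 9 by decide) <| .cons (show R10.Adj 9 0 by decide) .nil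

theorem R10.isUniqueChord_octagon : IsUniqueChord R10 R10.octagon s(0, 1) := by
  rw [isUniqueChord_mk_iff, isChord_mk_iff, R10.octagon, Walk.cons_isCycle_iff, Walk.isPath_def]
  exact ⟨⟨by decide, by decide⟩, by decide, by decide⟩

theorem R10.isUniqueChord_hexagon : IsUniqueChord R10 R10.hexagon s(0, 5) := by
  rw [isUniqueChord_mk_iff, isChord_mk_iff, R10.hexagon, Walk.cons_isCycle_iff, Walk.isPath_def]
  exact ⟨⟨by decide, by decide⟩, by decide, by decide⟩

/-- in `R₁₀`, every edge is the unique chord of some cycle. -/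
theorem stmt12 :
    ∀ e ∈ R10.edgeSet, ∃ (x : ZMod 10) (c : R10.Walk x x),
      IsUniqueChord R10 c e := by
  intro e he
  obtain ⟨a, rfl | rfl⟩ := R10.exists_rotate_of_mem_edgeSet he
  · exact ⟨_, _, R10.isUniqueChord_octagon.map_iso (R10.rotate a)⟩
  · exact ⟨_, _, R10.isUniqueChord_hexagon.map_iso (R10.rotate a)⟩
end
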